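/- arXiv:2207.07849 — 2 statements merged into one kernel-verified Lean document; each statement's English description precedes it below -/
import Mathlib

section
/- Let q₀ > 0 and let q : ℝ×ℝ → ℂ be smooth. For k ∈ ℂ define the 2×2 matrices Q(x,t) = [[0, q],[−q̄, 0]], X(x,t,k) = −ik σ₃ + Q, and T(x,t,k) = [3i|q|⁴ + i|q|² + i(q_{xx} q̄ + q q̄_{xx} − |q_x|²) − 2k(q q̄_x − q_x q̄) − 2ik²(2|q|² + 1) + 8ik⁴ − i(3q₀²+1)q₀²] σ₃ − 4ik² σ₃ Q_x − 8k³ Q + 6i Q² Q_x σ₃ + i σ₃ Q_x + i σ₃ Q_{xxx} + 2k(Q + Q_{xx} − 2Q³). Then the zero-curvature equation ∂_t X − ∂_x T + X T − T X = 0 holds for all k ∈ ℂ and all (x,t) ∈ ℝ² if and only if q satisfies the fourth-order dispersive nonlinear Schrödinger equation i q_t + q_{xx} + 2(|q|² − q₀²) q + q_{xxxx} + 8 q_{xx} |q|² + 2 q̄_{xx} q² + 6 q_x² q̄ + 4 q |q_x|² + 6(|q|⁴ − q₀⁴) q = 0 on ℝ². -/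
noncomputable section

open Matrix Complex

/-- Partial derivative in the first (space) variable. -/
def pdx (f : ℝ → ℝ → ℂ) : ℝ → ℝ → ℂ := fun x t => deriv (fun s => f s t) x

/-- Partial derivative in the second (time) variable. -/
def pdt (f : ℝ → ℝ → ℂ) : ℝ → ℝ → ℂ := fun x t => deriv (fun s => f x s) t

/-- The third Pauli matrix σ₃. -/
def sigma3 : Matrix (Fin 2) (Fin 2) ℂ := !![1, 0; 0, -1]

/-- The potential matrix Q = [[0, q],[−q̄, 0]]. -/
def Qmat (q : ℝ → ℝ → ℂ) (x t : ℝ) : Matrix (Fin 2) (Fin 2) ℂ :=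
  !![0, q x t; -((starRingEnd ℂ) (q x t)), 0]

/-- The space part X = −ik σ₃ + Q of the Lax pair. -/
def Xmat (q : ℝ → ℝ → ℂ) (k : ℂ) (x t : ℝ) : Matrix (Fin 2) (Fin 2) ℂ :=
  (-(I * k)) • sigma3 + Qmat q x t

/-- The time part T of the Lax pair (with γ = 1). -/
def Tmat (q₀ : ℝ) (q : ℝ → ℝ → ℂ) (k : ℂ) (x t : ℝ) : Matrix (Fin 2) (Fin 2) ℂ :=
  (3 * I * (q x t * (starRingEnd ℂ) (q x t)) ^ 2
      + I * (q x t * (starRingEnd ℂ) (q x t))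
      + I * (pdx (pdx q) x t * (starRingEnd ℂ) (q x t)
          + q x t * (starRingEnd ℂ) (pdx (pdx q) x t)
          - pdx q x t * (starRingEnd ℂ) (pdx q x t))
      - 2 * k * (q x t * (starRingEnd ℂ) (pdx q x t)
          - pdx q x t * (starRingEnd ℂ) (q x t))
      - 2 * I * k ^ 2 * (2 * (q x t * (starRingEnd ℂ) (q x t)) + 1)
      + 8 * I * k ^ 4
      - I * (3 * (q₀ : ℂ) ^ 2 + 1) * (q₀ : ℂ) ^ 2) • sigma3
  - (4 * I * k ^ 2) • (sigma3 * Qmat (pdx q) x t)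
  - (8 * k ^ 3) • Qmat q x t
  + (6 * I) • (Qmat q x t ^ 2 * Qmat (pdx q) x t * sigma3)
  + I • (sigma3 * Qmat (pdx q) x t)
  + I • (sigma3 * Qmat (pdx (pdx (pdx q))) x t)
  + (2 * k) • (Qmat q x t + Qmat (pdx (pdx q)) x t - (2 : ℂ) • Qmat q x t ^ 3)

/-!
Write `X = -ikσ₃ + Q` and `T = [[A, B], [C, -A]]`. For such traceless matrices the zero-curvature
matrix `X_t - T_x + [X, T]` has diagonal `±(qC + q̄B - A_x)` and off-diagonal entries
`q_t - B_x - 2(ikB + qA)` and `-q̄_t - C_x - 2(q̄A - ikC)`. A direct computation gives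
`A_x = qC + q̄B` and `B_x = -2ikB - 2qA + iL[q]`, where `i q_t + L[q] = 0` is the fourth-order NLS
equation, so every power of `k` cancels and the `(0,1)` entry is `-i(i q_t + L[q])`. The lower
entry `C` is `B` for `q̄` and `-k`, a substitution fixing `A` and conjugating `L[q]`, so the
`(1,0)` entry is the conjugate equation.
-/

open ComplexConjugate

def Tdiag (q₀ : ℝ) (q : ℝ → ℝ → ℂ) (k : ℂ) (x t : ℝ) : ℂ :=
  3 * I * (q x t * conj (q x t)) ^ 2 + I * (q x t * conj (q x t))
    + I * (pdx (pdx q) x t * conj (q x t) + q x t * conj (pdx (pdx q) x t)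
        - pdx q x t * conj (pdx q x t))
    - 2 * k * (q x t * conj (pdx q x t) - pdx q x t * conj (q x t))
    - 2 * I * k ^ 2 * (2 * (q x t * conj (q x t)) + 1)
    + 8 * I * k ^ 4 - I * (3 * (q₀ : ℂ) ^ 2 + 1) * (q₀ : ℂ) ^ 2

def Tupper (q : ℝ → ℝ → ℂ) (k : ℂ) (x t : ℝ) : ℂ :=
  -(4 * I * k ^ 2 * pdx q x t) - 8 * k ^ 3 * q x t
    + 6 * I * (q x t * conj (q x t) * pdx q x t) + I * pdx q x t + I * pdx (pdx (pdx q)) x t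
    + 2 * k * (q x t + pdx (pdx q) x t + 2 * (q x t ^ 2 * conj (q x t)))

def nlsSpatialPart (q₀ : ℝ) (q : ℝ → ℝ → ℂ) (x t : ℝ) : ℂ :=
  pdx (pdx q) x t + 2 * (q x t * conj (q x t) - (q₀ : ℂ) ^ 2) * q x t
    + pdx (pdx (pdx (pdx q))) x t + 8 * pdx (pdx q) x t * (q x t * conj (q x t))
    + 2 * conj (pdx (pdx q) x t) * q x t ^ 2 + 6 * pdx q x t ^ 2 * conj (q x t)
    + 4 * q x t * (pdx q x t * conj (pdx q x t))
    + 6 * ((q x t * conj (q x t)) ^ 2 - (q₀ : ℂ) ^ 4) * q x t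

theorem ContDiff.hasDerivAt_iterate_deriv {𝕜 F : Type*} [NontriviallyNormedField 𝕜]
    [NormedAddCommGroup F] [NormedSpace 𝕜 F] {f : 𝕜 → F} {n : WithTop ℕ∞}
    (hf : ContDiff 𝕜 n f) {m : ℕ} (hm : m < n) (x : 𝕜) :
    HasDerivAt (deriv^[m] f) (deriv^[m + 1] f x) x := by
  rw [Function.iterate_succ_apply', ← iteratedDeriv_eq_iterate]
  exact (hf.differentiable_iteratedDeriv m hm x).hasDerivAt

theorem of_deriv_fin_two {𝕜 F : Type*} [NontriviallyNormedField 𝕜] [NormedAddCommGroup F]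
    [NormedSpace 𝕜 F] {f₀₀ f₀₁ f₁₀ f₁₁ : 𝕜 → F} {a b c d : F} {x : 𝕜}
    (h₀₀ : HasDerivAt f₀₀ a x) (h₀₁ : HasDerivAt f₀₁ b x) (h₁₀ : HasDerivAt f₁₀ c x)
    (h₁₁ : HasDerivAt f₁₁ d x) :
    (Matrix.of fun i j => deriv (fun s => !![f₀₀ s, f₀₁ s; f₁₀ s, f₁₁ s] i j) x)
      = !![a, b; c, d] := by
  ext i j
  fin_cases i <;> fin_cases j
  exacts [h₀₀.deriv, h₀₁.deriv, h₁₀.deriv, h₁₁.deriv]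

theorem zeroCurvature_fin_two {𝕜 R : Type*} [NontriviallyNormedField 𝕜] [NormedCommRing R]
    [NormedAlgebra 𝕜 R] {a : R} {u v A B C : 𝕜 → R} {u' v' A' B' C' : R} {x t : 𝕜}
    (hu : HasDerivAt u u' t) (hv : HasDerivAt v v' t)
    (hA : HasDerivAt A A' x) (hB : HasDerivAt B B' x) (hC : HasDerivAt C C' x) :
    (Matrix.of fun i j => deriv (fun s => !![-a, u s; v s, a] i j) t)
      - (Matrix.of fun i j => deriv (fun s => !![A s, B s; C s, -A s] i j) x)
      + !![-a, u t; v t, a] * !![A x, B x; C x, -A x]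
      - !![A x, B x; C x, -A x] * !![-a, u t; v t, a]
    = !![u t * C x - v t * B x - A', u' - B' - 2 * (a * B x + u t * A x);
        v' - C' + 2 * (v t * A x + a * C x), A' + v t * B x - u t * C x] := by
  rw [of_deriv_fin_two (hasDerivAt_const t (-a)) hu hv (hasDerivAt_const t a),
    of_deriv_fin_two hA hB hC (f₁₁ := fun s => -A s) hA.neg, Matrix.mul_fin_two,
    Matrix.mul_fin_two]
  ext i j
  fin_cases i <;> fin_cases j <;>
    simp only [Matrix.sub_apply, Matrix.add_apply, Matrix.of_apply, Matrix.cons_val',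
      Matrix.cons_val_zero, Matrix.cons_val_one, Matrix.cons_val_fin_one,
      Fin.zero_eta, Fin.mk_one] <;>
    ring

lemma pdx_conj (q : ℝ → ℝ → ℂ) :
    pdx (fun x t => conj (q x t)) = fun x t => conj (pdx q x t) := by
  funext x t
  exact deriv.star

lemma Xmat_eq (q : ℝ → ℝ → ℂ) (k : ℂ) (x t : ℝ) :
    Xmat q k x t = !![-(I * k), q x t; -conj (q x t), I * k] := by
  ext i j
  fin_cases i <;> fin_cases j <;> simp [Xmat, sigma3, Qmat]

lemma Tmat_eq (q₀ : ℝ) (q : ℝ → ℝ → ℂ) (k : ℂ) (x t : ℝ) :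
    Tmat q₀ q k x t = !![Tdiag q₀ q k x t, Tupper q k x t;
      Tupper (fun x t => conj (q x t)) (-k) x t, -Tdiag q₀ q k x t] := by
  ext i j
  fin_cases i <;> fin_cases j <;>
    simp only [Tmat, Qmat, sigma3, Tdiag, Tupper, pdx_conj, pow_succ, pow_zero, one_mul,
      Matrix.mul_fin_two, Matrix.smul_of, Matrix.of_sub_of, Matrix.of_add_of, Matrix.smul_cons,
      Matrix.smul_empty, Matrix.cons_sub_cons, Matrix.cons_add_cons, Matrix.empty_add_empty,
      Matrix.empty_sub_empty, Matrix.of_apply, Matrix.cons_val', Matrix.cons_val_zero,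
      Matrix.cons_val_one, Matrix.empty_val', Matrix.cons_val_fin_one, smul_eq_mul,
      Complex.conj_conj, Fin.zero_eta, Fin.mk_one] <;>
    ring

lemma Tdiag_conj_neg (q₀ : ℝ) (q : ℝ → ℝ → ℂ) (k : ℂ) (x t : ℝ) :
    Tdiag q₀ (fun x t => conj (q x t)) (-k) x t = Tdiag q₀ q k x t := by
  simp only [Tdiag, pdx_conj, Complex.conj_conj]
  ring

lemma nlsSpatialPart_conj (q₀ : ℝ) (q : ℝ → ℝ → ℂ) (x t : ℝ) :
    nlsSpatialPart q₀ (fun x t => conj (q x t)) x t = conj (nlsSpatialPart q₀ q x t) := by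
  simp only [nlsSpatialPart, pdx_conj, Complex.conj_conj, map_add, map_sub, map_mul, map_pow,
    map_ofNat, Complex.conj_ofReal]

lemma hasDerivAt_Tdiag {q : ℝ → ℝ → ℂ} {t : ℝ} (hq : ContDiff ℝ 3 (fun s => q s t))
    (q₀ : ℝ) (k : ℂ) (x : ℝ) :
    HasDerivAt (fun s => Tdiag q₀ q k s t)
      (q x t * Tupper (fun x t => conj (q x t)) (-k) x t + conj (q x t) * Tupper q k x t) x := by
  have h₀ : HasDerivAt (fun s => q s t) (pdx q x t) x :=
    hq.hasDerivAt_iterate_deriv (m := 0) (by norm_num) x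
  have h₁ : HasDerivAt (fun s => pdx q s t) (pdx (pdx q) x t) x :=
    hq.hasDerivAt_iterate_deriv (m := 1) (by norm_num) x
  have h₂ : HasDerivAt (fun s => pdx (pdx q) s t) (pdx (pdx (pdx q)) x t) x :=
    hq.hasDerivAt_iterate_deriv (m := 2) (by norm_num) x
  have hqq := h₀.mul h₀.star
  refine ((((((((hqq.pow 2).const_mul (3 * I)).add (hqq.const_mul I)).add
    ((((h₂.mul h₀.star).add (h₀.mul h₂.star)).sub (h₁.mul h₁.star)).const_mul I)).sub
    (((h₀.mul h₁.star).sub (h₁.mul h₀.star)).const_mul (2 * k))).sub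
    (((hqq.const_mul 2).add_const 1).const_mul (2 * I * k ^ 2))).add_const (8 * I * k ^ 4)).sub_const
    (I * (3 * (q₀ : ℂ) ^ 2 + 1) * (q₀ : ℂ) ^ 2)).congr_deriv ?_
  simp only [Tupper, pdx_conj, Complex.conj_conj, Pi.mul_apply]
  simp only [starRingEnd_apply]
  ring

lemma hasDerivAt_Tupper {q : ℝ → ℝ → ℂ} {t : ℝ} (hq : ContDiff ℝ 4 (fun s => q s t))
    (q₀ : ℝ) (k : ℂ) (x : ℝ) :
    HasDerivAt (fun s => Tupper q k s t)
      (-2 * I * k * Tupper q k x t - 2 * q x t * Tdiag q₀ q k x t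
        + I * nlsSpatialPart q₀ q x t) x := by
  have h₀ : HasDerivAt (fun s => q s t) (pdx q x t) x :=
    hq.hasDerivAt_iterate_deriv (m := 0) (by norm_num) x
  have h₁ : HasDerivAt (fun s => pdx q s t) (pdx (pdx q) x t) x :=
    hq.hasDerivAt_iterate_deriv (m := 1) (by norm_num) x
  have h₂ : HasDerivAt (fun s => pdx (pdx q) s t) (pdx (pdx (pdx q)) x t) x :=
    hq.hasDerivAt_iterate_deriv (m := 2) (by norm_num) x
  have h₃ : HasDerivAt (fun s => pdx (pdx (pdx q)) s t) (pdx (pdx (pdx (pdx q))) x t) x :=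
    hq.hasDerivAt_iterate_deriv (m := 3) (by norm_num) x
  have c₀ : HasDerivAt (fun s => conj (q s t)) (conj (pdx q x t)) x := h₀.star
  refine ((((((h₁.const_mul (4 * I * k ^ 2)).neg.sub (h₀.const_mul (8 * k ^ 3))).add
    (((h₀.mul c₀).mul h₁).const_mul (6 * I))).add (h₁.const_mul I)).add (h₃.const_mul I)).add
    (((h₀.add h₂).add (((h₀.pow 2).mul c₀).const_mul 2)).const_mul (2 * k))).congr_deriv ?_
  simp only [Tdiag, Tupper, nlsSpatialPart, Pi.mul_apply, Pi.pow_apply]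
  ring_nf
  simp only [I_sq]
  ring

theorem zeroCurvature_eq (q₀ : ℝ) {q : ℝ → ℝ → ℂ} (k : ℂ) {x t : ℝ}
    (hx : ContDiff ℝ 4 (fun s => q s t)) (ht : DifferentiableAt ℝ (q x) t) :
    (Matrix.of fun i j => deriv (fun s => Xmat q k x s i j) t)
      - (Matrix.of fun i j => deriv (fun s => Tmat q₀ q k s t i j) x)
      + Xmat q k x t * Tmat q₀ q k x t - Tmat q₀ q k x t * Xmat q k x t
    = !![0, -(I * (I * pdt q x t + nlsSpatialPart q₀ q x t));
        -(I * conj (I * pdt q x t + nlsSpatialPart q₀ q x t)), 0] := by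
  have hu : HasDerivAt (q x) (pdt q x t) t := ht.hasDerivAt
  have hv : HasDerivAt (fun s => -conj (q x s)) (-conj (pdt q x t)) t := hu.star.neg
  have hC := hasDerivAt_Tupper (q := fun x t => conj (q x t)) (conjCLE.contDiff.comp hx) q₀ (-k) x
  simp only [Xmat_eq, Tmat_eq]
  rw [zeroCurvature_fin_two hu hv (hasDerivAt_Tdiag (hx.of_le (by norm_num)) q₀ k x)
    (hasDerivAt_Tupper hx q₀ k x) hC, Tdiag_conj_neg, nlsSpatialPart_conj]
  ext i j
  fin_cases i <;> fin_cases j <;>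
    simp only [Matrix.of_apply, Matrix.cons_val', Matrix.cons_val_zero, Matrix.cons_val_one,
      Matrix.cons_val_fin_one, Fin.zero_eta, Fin.mk_one, map_add, map_mul, conj_I]
  · ring
  · linear_combination pdt q x t * I_mul_I
  · linear_combination -conj (pdt q x t) * I_mul_I
  · ring

lemma offDiag_neg_I_mul_eq_zero_iff (N : ℂ) :
    !![0, -(I * N); -(I * conj N), 0] = 0 ↔ N = 0 := by
  constructor
  · intro h
    simpa using congrFun (congrFun h 0) 1
  · rintro rfl
    ext i j
    fin_cases i <;> fin_cases j <;> simp

theorem zero_curvature_iff_fourth_order_NLS_general (q₀ : ℝ) (q : ℝ → ℝ → ℂ)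
    (hq : ContDiff ℝ ((⊤ : ℕ∞) : WithTop ℕ∞) (fun p : ℝ × ℝ => q p.1 p.2)) :
    (∀ (k : ℂ) (x t : ℝ),
        (Matrix.of fun i j => deriv (fun s => Xmat q k x s i j) t)
          - (Matrix.of fun i j => deriv (fun s => Tmat q₀ q k s t i j) x)
          + Xmat q k x t * Tmat q₀ q k x t - Tmat q₀ q k x t * Xmat q k x t = 0)
    ↔ (∀ x t : ℝ,
        I * pdt q x t + pdx (pdx q) x t
          + 2 * (q x t * (starRingEnd ℂ) (q x t) - (q₀ : ℂ) ^ 2) * q x t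
          + pdx (pdx (pdx (pdx q))) x t
          + 8 * pdx (pdx q) x t * (q x t * (starRingEnd ℂ) (q x t))
          + 2 * (starRingEnd ℂ) (pdx (pdx q) x t) * q x t ^ 2
          + 6 * (pdx q x t) ^ 2 * (starRingEnd ℂ) (q x t)
          + 4 * q x t * (pdx q x t * (starRingEnd ℂ) (pdx q x t))
          + 6 * ((q x t * (starRingEnd ℂ) (q x t)) ^ 2 - (q₀ : ℂ) ^ 4) * q x t = 0) := by
  have hx (t : ℝ) : ContDiff ℝ 4 (fun s => q s t) :=
    (hq.comp (contDiff_id.prodMk contDiff_const)).of_le (by norm_cast)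
  have ht (x t : ℝ) : DifferentiableAt ℝ (q x) t :=
    (hq.comp (contDiff_const.prodMk contDiff_id)).differentiable (by simp) t
  calc _ ↔ ∀ (_ : ℂ) (x t : ℝ), I * pdt q x t + nlsSpatialPart q₀ q x t = 0 :=
        forall_congr' fun k => forall₂_congr fun x t => by
          rw [zeroCurvature_eq q₀ k (hx t) (ht x t), offDiag_neg_I_mul_eq_zero_iff]
    _ ↔ _ := by simp only [forall_const, nlsSpatialPart, add_assoc]

/-- The zero-curvature equation ∂ₜX − ∂ₓT + XT − TX = 0 holds for all k iff q solves the
fourth-order dispersive NLS equation (γ = 1) with nonzero background q₀. -/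
theorem zero_curvature_iff_fourth_order_NLS (q₀ : ℝ) (hq₀ : 0 < q₀) (q : ℝ → ℝ → ℂ)
    (hq : ContDiff ℝ ((⊤ : ℕ∞) : WithTop ℕ∞) (fun p : ℝ × ℝ => q p.1 p.2)) :
    (∀ (k : ℂ) (x t : ℝ),
        (Matrix.of fun i j => deriv (fun s => Xmat q k x s i j) t)
          - (Matrix.of fun i j => deriv (fun s => Tmat q₀ q k s t i j) x)
          + Xmat q k x t * Tmat q₀ q k x t - Tmat q₀ q k x t * Xmat q k x t = 0)
    ↔ (∀ x t : ℝ,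
        I * pdt q x t + pdx (pdx q) x t
          + 2 * (q x t * (starRingEnd ℂ) (q x t) - (q₀ : ℂ) ^ 2) * q x t
          + pdx (pdx (pdx (pdx q))) x t
          + 8 * pdx (pdx q) x t * (q x t * (starRingEnd ℂ) (q x t))
          + 2 * (starRingEnd ℂ) (pdx (pdx q) x t) * q x t ^ 2
          + 6 * (pdx q x t) ^ 2 * (starRingEnd ℂ) (q x t)
          + 4 * q x t * (pdx q x t * (starRingEnd ℂ) (pdx q x t))
          + 6 * ((q x t * (starRingEnd ℂ) (q x t)) ^ 2 - (q₀ : ℂ) ^ 4) * q x t = 0) :=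
  zero_curvature_iff_fourth_order_NLS_general q₀ q hq
end
end

section
/- Let a, b, d ∈ ℂ with a ≠ 0, d ≠ 0, let θ ∈ ℂ, and let Ψ₊, Ψ₋ ∈ M₂(ℂ) with det Ψ₊ = det Ψ₋ = d and Ψ₋ = Ψ₊ s where s = [[a, −b̄],[b, ā]] (bars denoting complex conjugation). Set γ = b/a and define m₊ to be the matrix whose first column is e^{iθ}·(first column of Ψ₋)/(a d) and whose second column is e^{−iθ}·(second column of Ψ₊), and m₋ the matrix whose first column is e^{iθ}·(first column of Ψ₊) and whose second column is e^{−iθ}·(second column of Ψ₋)/(ā d). Then m₊ = m₋ J with J = [[(1 + γ γ̄)/d, γ̄ e^{−2iθ}],[γ e^{2iθ}, d]]. -/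
noncomputable section

open Matrix Complex

/-! With `φ = e^{iθ}`, both `m₊` and `m₋` factor as `Ψ₊` times an explicit triangular matrix,
because `Ψ₋ = Ψ₊ s`. The jump relation thereby reduces to an identity between `2 × 2` matrices
in `a, b, ā, b̄, d, φ`, which holds because `γ̄ = b̄ / ā` makes the `(1,2)` entry cancel and
turns `1 + γγ̄ - γ b̄ / ā` into `1`. -/

namespace Matrix

variable {R : Type*} [CommRing R]

theorem of_fin_two_cols_mul_zero (P S : Matrix (Fin 2) (Fin 2) R) (x y : R) :
    !![x * (P * S) 0 0, y * P 0 1; x * (P * S) 1 0, y * P 1 1] =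
      P * !![x * S 0 0, 0; x * S 1 0, y] := by
  ext i j
  fin_cases i <;> fin_cases j <;> simp [mul_apply, Fin.sum_univ_two] <;> ring

theorem of_fin_two_cols_mul_one (P S : Matrix (Fin 2) (Fin 2) R) (x y : R) :
    !![x * P 0 0, y * (P * S) 0 1; x * P 1 0, y * (P * S) 1 1] =
      P * !![x, y * S 0 1; 0, y * S 1 1] := by
  ext i j
  fin_cases i <;> fin_cases j <;> simp [mul_apply, Fin.sum_univ_two] <;> ring

end Matrix

theorem jump_factor_mul_jump_matrix {K : Type*} [Field K] {a b a' b' d φ : K}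
    (ha : a ≠ 0) (ha' : a' ≠ 0) (hd : d ≠ 0) (hφ : φ ≠ 0) :
    !![φ, φ⁻¹ / (a' * d) * -b'; 0, φ⁻¹ / (a' * d) * a'] *
        !![(1 + b / a * (b' / a')) / d, b' / a' * (φ ^ 2)⁻¹; b / a * φ ^ 2, d] =
      !![φ / (a * d) * a, 0; φ / (a * d) * b, φ⁻¹] := by
  ext i j
  fin_cases i <;> fin_cases j <;> simp [mul_apply, Fin.sum_univ_two] <;> field_simp <;> ring

theorem jump_relation_general (a b d θ : ℂ) (ha : a ≠ 0) (hd : d ≠ 0)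
    (Ψp Ψm : Matrix (Fin 2) (Fin 2) ℂ)
    (hs : Ψm = Ψp * !![a, -((starRingEnd ℂ) b); b, (starRingEnd ℂ) a]) :
    let γ : ℂ := b / a
    let mp : Matrix (Fin 2) (Fin 2) ℂ :=
      !![Complex.exp (I * θ) * Ψm 0 0 / (a * d), Complex.exp (-(I * θ)) * Ψp 0 1;
         Complex.exp (I * θ) * Ψm 1 0 / (a * d), Complex.exp (-(I * θ)) * Ψp 1 1]
    let mm : Matrix (Fin 2) (Fin 2) ℂ :=
      !![Complex.exp (I * θ) * Ψp 0 0,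
           Complex.exp (-(I * θ)) * Ψm 0 1 / ((starRingEnd ℂ) a * d);
         Complex.exp (I * θ) * Ψp 1 0,
           Complex.exp (-(I * θ)) * Ψm 1 1 / ((starRingEnd ℂ) a * d)]
    let J : Matrix (Fin 2) (Fin 2) ℂ :=
      !![(1 + γ * (starRingEnd ℂ) γ) / d, (starRingEnd ℂ) γ * Complex.exp (-(2 * I * θ));
         γ * Complex.exp (2 * I * θ), d]
    mp = mm * J := by
  intro γ mp mm J
  have exp_two : Complex.exp (2 * I * θ) = Complex.exp (I * θ) ^ 2 := by
    rw [← Complex.exp_nat_mul]; ring_nf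
  have exp_neg_two : Complex.exp (-(2 * I * θ)) = (Complex.exp (I * θ) ^ 2)⁻¹ := by
    rw [Complex.exp_neg, exp_two]
  subst hs
  simp only [mp, mm, J, γ, mul_div_right_comm, of_fin_two_cols_mul_zero, of_fin_two_cols_mul_one,
    Matrix.mul_assoc, map_div₀, exp_two, exp_neg_two, Complex.exp_neg, of_apply, cons_val',
    cons_val_zero, cons_val_one, empty_val', cons_val_fin_one]
  rw [jump_factor_mul_jump_matrix ha ((map_ne_zero _).2 ha) hd (Complex.exp_ne_zero _)]

/-- The jump relation m₊ = m₋ J of the basic Riemann–Hilbert problem across the real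
axis, with reflection coefficient γ = b/a. -/
theorem jump_relation (a b d θ : ℂ) (ha : a ≠ 0) (hd : d ≠ 0)
    (Ψp Ψm : Matrix (Fin 2) (Fin 2) ℂ)
    (hdetp : Ψp.det = d) (hdetm : Ψm.det = d)
    (hs : Ψm = Ψp * !![a, -((starRingEnd ℂ) b); b, (starRingEnd ℂ) a]) :
    let γ : ℂ := b / a
    let mp : Matrix (Fin 2) (Fin 2) ℂ :=
      !![Complex.exp (I * θ) * Ψm 0 0 / (a * d), Complex.exp (-(I * θ)) * Ψp 0 1;
         Complex.exp (I * θ) * Ψm 1 0 / (a * d), Complex.exp (-(I * θ)) * Ψp 1 1]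
    let mm : Matrix (Fin 2) (Fin 2) ℂ :=
      !![Complex.exp (I * θ) * Ψp 0 0,
           Complex.exp (-(I * θ)) * Ψm 0 1 / ((starRingEnd ℂ) a * d);
         Complex.exp (I * θ) * Ψp 1 0,
           Complex.exp (-(I * θ)) * Ψm 1 1 / ((starRingEnd ℂ) a * d)]
    let J : Matrix (Fin 2) (Fin 2) ℂ :=
      !![(1 + γ * (starRingEnd ℂ) γ) / d, (starRingEnd ℂ) γ * Complex.exp (-(2 * I * θ));
         γ * Complex.exp (2 * I * θ), d]
    mp = mm * J :=
  jump_relation_general a b d θ ha hd Ψp Ψm hs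
end
end
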